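/- arXiv:cs/0606085 — 6 statements merged into one kernel-verified Lean document; each statement's English description precedes it below -/
import Mathlib

section
/- Let A be a nonempty finite linearly ordered alphabet and μ a probability distribution on A. Define the encoder g : A × A × {0,1} → A × A by g(x₁, x₂, y) = (x₁, x₂) if x₁ = x₂, and otherwise g(x₁, x₂, y) = (min(x₁,x₂), max(x₁,x₂)) if y = 0 and g(x₁, x₂, y) = (max(x₁,x₂), min(x₁,x₂)) if y = 1. If X₁, X₂ are independent with law μ and Y is an independent uniformly distributed bit, then g(X₁, X₂, Y) has the same law as (X₁, X₂): the pushforward of (μ ⊗ μ) ⊗ Uniform({0,1}) under g equals μ ⊗ μ. -/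
open scoped ENNReal

open scoped Classical

/-- The encoder `St₂(A)`: it leaves equal pairs unchanged and, for unequal pairs,
outputs the increasingly ordered pair when the secret bit is `0` (i.e. `false`)
and the decreasingly ordered pair when it is `1` (i.e. `true`). -/
def encodeSt2 {A : Type*} [LinearOrder A] (x : A × A) (y : Bool) : A × A :=
  if x.1 = x.2 then x
  else if y = false then (min x.1 x.2, max x.1 x.2) else (max x.1 x.2, min x.1 x.2)

/-- The law of two independent draws from `μ` (the product distribution `μ ⊗ μ`). -/
noncomputable def pairLaw {A : Type*} (μ : PMF A) : PMF (A × A) :=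
  μ.bind fun x1 => μ.map fun x2 => (x1, x2)

/-- The law of `((X₁, X₂), Y)` with `X₁, X₂` independent with law `μ` and `Y` an
independent uniform bit: `(μ ⊗ μ) ⊗ Uniform({0,1})`. -/
noncomputable def inputLaw {A : Type*} (μ : PMF A) : PMF ((A × A) × Bool) :=
  (pairLaw μ).bind fun p => (PMF.uniformOfFintype Bool).map fun y => (p, y)

lemma encode_false {A : Type*} [LinearOrder A] (x1 x2 : A) :
    encodeSt2 (x1, x2) false = (min x1 x2, max x1 x2) := by
  unfold encodeSt2; split_ifs with h <;> simp_all [Prod.ext_iff]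

lemma encode_true {A : Type*} [LinearOrder A] (x1 x2 : A) :
    encodeSt2 (x1, x2) true = (max x1 x2, min x1 x2) := by
  unfold encodeSt2; split_ifs with h <;> simp_all [Prod.ext_iff]

lemma helper {β γ : Type*} (f : γ → ℝ≥0∞) (u : β) (v : γ) (b' : β)
    [∀ x : γ, Decidable ((u, v) = (b', x))] [Decidable (u = b')] :
    (∑' x : γ, if (u, v) = (b', x) then f x else 0) = if u = b' then f v else 0 := by
  by_cases h : u = b'
  · subst h
    rw [if_pos rfl, tsum_eq_single v]
    · exact if_pos rfl
    · intro x hx; exact if_neg (fun hc => hx (congrArg Prod.snd hc).symm)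
  · rw [if_neg h, ENNReal.tsum_eq_zero]
    intro x; exact if_neg (fun hc => h (congrArg Prod.fst hc))

lemma helper2 {β γ : Type*} (f : β → γ → ℝ≥0∞) (u : β) (v : γ)
    [∀ (x : β) (y : γ), Decidable ((x, y) = (u, v))] :
    (∑' x : β, ∑' y : γ, if (x, y) = (u, v) then f x y else 0) = f u v := by
  rw [tsum_eq_single u, tsum_eq_single v]
  · exact if_pos rfl
  · intro y hy; exact if_neg (fun hc => hy (congrArg Prod.snd hc))
  · intro x hx; rw [ENNReal.tsum_eq_zero]; intro y
    exact if_neg (fun hc => hx (congrArg Prod.fst hc))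

lemma pairLaw_apply {A : Type*} (μ : PMF A) (a b : A) :
    pairLaw μ (a, b) = μ a * μ b := by
  simp only [pairLaw, PMF.bind_apply, PMF.map_apply]
  trans (∑' x1 : A, μ x1 * if a = x1 then μ b else 0)
  · exact tsum_congr fun x1 => congrArg (fun z => μ x1 * z)
      (@helper A A (fun x => μ x) a b x1 (fun _ => Classical.propDecidable _)
        (Classical.propDecidable _))
  · rw [tsum_eq_single a]
    · rw [if_pos rfl]
    · intro x hx; rw [if_neg (Ne.symm hx), mul_zero]

lemma inputLaw_apply {A : Type*} (μ : PMF A) (p : A × A) (y : Bool) :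
    inputLaw μ (p, y) = pairLaw μ p * 2⁻¹ := by
  simp only [inputLaw, PMF.bind_apply, PMF.map_apply, PMF.uniformOfFintype_apply]
  trans (∑' q : A × A, (pairLaw μ) q * if p = q then ((Fintype.card Bool : ℝ≥0∞))⁻¹ else 0)
  · exact tsum_congr fun q => congrArg (fun z => (pairLaw μ) q * z)
      (helper (fun _ : Bool => ((Fintype.card Bool : ℝ≥0∞))⁻¹) p y q)
  · rw [tsum_eq_single p]
    · rw [if_pos rfl]; norm_num
    · intro x hx; rw [if_neg (Ne.symm hx), mul_zero]

lemma step {A : Type*} [Fintype A] [Nonempty A] [LinearOrder A] (μ : PMF A) (a b x1 x2 : A)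
    [Decidable ((a, b) = encodeSt2 ((x1, x2) : A × A) false)]
    [Decidable ((a, b) = encodeSt2 ((x1, x2) : A × A) true)] :
    ((if (a, b) = encodeSt2 ((x1, x2) : A × A) false then inputLaw μ ((x1, x2), false) else 0) +
      (if (a, b) = encodeSt2 ((x1, x2) : A × A) true then inputLaw μ ((x1, x2), true) else 0)) =
    ((if ((x1, x2) : A × A) = (a, b) then μ x1 * μ x2 * 2⁻¹ else 0) +
      (if ((x1, x2) : A × A) = (b, a) then μ x1 * μ x2 * 2⁻¹ else 0)) := by
  simp only [encode_false, encode_true, inputLaw_apply, pairLaw_apply]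
  rcases le_total x1 x2 with h | h
  · simp only [min_eq_left h, max_eq_right h]
    congr 1 <;> apply if_congr _ rfl rfl <;>
      (rw [Prod.ext_iff, Prod.ext_iff]; constructor <;> (rintro ⟨rfl, rfl⟩; exact ⟨rfl, rfl⟩))
  · simp only [min_eq_right h, max_eq_left h]
    rw [add_comm]
    congr 1 <;> apply if_congr _ rfl rfl <;>
      (rw [Prod.ext_iff, Prod.ext_iff]; constructor <;> (rintro ⟨rfl, rfl⟩; exact ⟨rfl, rfl⟩))

theorem stmt1 (A : Type*) [Fintype A] [Nonempty A] [LinearOrder A] (μ : PMF A) :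
    (inputLaw μ).map (fun q => encodeSt2 q.1 q.2) = pairLaw μ := by
  ext ⟨a, b⟩
  rw [PMF.map_apply, pairLaw_apply, ENNReal.tsum_prod']
  simp only [tsum_bool]
  rw [ENNReal.tsum_prod']
  trans (∑' x1 : A, ∑' x2 : A,
      ((if ((x1, x2) : A × A) = (a, b) then μ x1 * μ x2 * 2⁻¹ else 0) +
        (if ((x1, x2) : A × A) = (b, a) then μ x1 * μ x2 * 2⁻¹ else 0)))
  · exact tsum_congr fun x1 => tsum_congr fun x2 =>
      @step A _ _ _ μ a b x1 x2 (Classical.propDecidable _) (Classical.propDecidable _)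
  · simp only [ENNReal.tsum_add]
    rw [helper2 (fun x y => μ x * μ y * 2⁻¹) a b, helper2 (fun x y => μ x * μ y * 2⁻¹) b a]
    rw [mul_comm (μ b) (μ a), ← mul_add, ENNReal.inv_two_add_inv_two, mul_one]
end

section
/- Let A be a nonempty finite alphabet, μ a probability distribution on A, n ≥ 1, and μ^n the product distribution on words Fin n → A. For a word u, let S_u = {v : Fin n → A | ν_v(a) = ν_u(a) for all a ∈ A} be its type class. Then the distribution obtained by first drawing U according to μ^n and then drawing V uniformly at random from S_U equals μ^n; that is, the PMF bind of μ^n with u ↦ Uniform(S_u) is μ^n. Consequently the output blocks of the stegosystem St_n(A) have exactly the covertext distribution μ^n. -/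
/-! Since μⁿ(u) = ∏ₐ μ(a) ^ νᵤ(a), μⁿ is constant on every type class. Resampling uniformly
inside the class of a μⁿ-distributed word moves no mass between classes and spreads the mass of
each class evenly over it, which is exactly how μⁿ distributes it. -/

open Finset
open scoped ENNReal

namespace PMF

variable {α β : Type*} [Fintype α] [DecidableEq β]

theorem bind_uniformOfFinset_fiber (p : PMF α) (f : α → β)
    (hp : ∀ u v, f u = f v → p u = p v) :
    (p.bind fun u =>
      uniformOfFinset {v | f v = f u} (filter_nonempty_iff.2 ⟨u, mem_univ u, rfl⟩)) = p := by
  ext v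
  have hterm : ∀ u,
      p u * uniformOfFinset {w | f w = f u} (filter_nonempty_iff.2 ⟨u, mem_univ u, rfl⟩) v =
        if f u = f v then p v * (#{w | f w = f v} : ℝ≥0∞)⁻¹ else 0 := by
    intro u
    simp only [uniformOfFinset_apply, mem_filter_univ]
    by_cases h : f u = f v
    · rw [if_pos h.symm, if_pos h, hp u v h, h]
    · rw [if_neg (Ne.symm h), if_neg h, mul_zero]
  have hcard : (#{w | f w = f v} : ℝ≥0∞) ≠ 0 :=
    Nat.cast_ne_zero.2 (card_ne_zero_of_mem ((mem_filter_univ v).2 rfl))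
  rw [bind_apply, tsum_fintype, Finset.sum_congr rfl fun u _ => hterm u, ← sum_filter,
    sum_const, nsmul_eq_mul, mul_left_comm,
    ENNReal.mul_inv_cancel hcard (ENNReal.natCast_ne_top _), mul_one]

end PMF

theorem Finset.prod_comp_eq_prod_pow_card_fiber {ι A M : Type*} [Fintype ι] [Fintype A]
    [DecidableEq A] [CommMonoid M] (f : A → M) (u : ι → A) :
    ∏ i, f (u i) = ∏ a, f a ^ #{i | u i = a} := by
  simp only [← prod_fiberwise' univ u f, prod_const]

theorem stmt8 (A : Type*) [Fintype A] [DecidableEq A] (μ : PMF A)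
    (n : ℕ)
    -- μⁿ is the product distribution on words of length n
    (μn : PMF (Fin n → A)) (hμn : ∀ u : Fin n → A, μn u = ∏ i, μ (u i)) :
    -- drawing U ~ μⁿ and then V uniformly from the type class S_U gives back μⁿ
    (μn.bind fun u =>
        PMF.uniformOfFinset
          (Finset.univ.filter fun v : Fin n → A =>
            ∀ a : A, (Finset.univ.filter fun i => v i = a).card =
              (Finset.univ.filter fun i => u i = a).card)
          ⟨u, by simp⟩) = μn := by
  let ν : (Fin n → A) → A → ℕ := fun u a => #{i | u i = a}
  have htype : ∀ u v, ν u = ν v → μn u = μn v := fun u v h => by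
    simp only [hμn, Finset.prod_comp_eq_prod_pow_card_fiber μ]
    exact congrArg (fun c : A → ℕ => ∏ a, μ a ^ c a) h
  convert PMF.bind_uniformOfFinset_fiber μn ν htype using 4 with u
  simp [ν, funext_iff]
end

section
/- Let N ≥ 2 be a natural number with binary expansion N = Σ_{i=0}^{m} α_i 2^i (α_i ∈ {0,1}, α_m = 1, m = ⌊log₂ N⌋). Then (1/N) · Σ_{i=0}^{m} i · α_i · 2^i ≥ log₂ N − 2. -/
lemma aux_geom (m : ℕ) : ∑ i ∈ Finset.range m, 2 ^ i = 2 ^ m - 1 := by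
  induction m with
  | zero => simp
  | succ m ih =>
    rw [Finset.sum_range_succ, ih]
    have : 1 ≤ 2 ^ m := Nat.one_le_two_pow
    omega

lemma aux_slack (m : ℕ) : ∑ i ∈ Finset.range m, (m - 1 - i) * 2 ^ i ≤ 2 ^ m := by
  induction m with
  | zero => simp
  | succ m ih =>
    rw [Finset.sum_range_succ]
    have h1 : ∑ i ∈ Finset.range m, (m + 1 - 1 - i) * 2 ^ i ≤
        ∑ i ∈ Finset.range m, ((m - 1 - i) * 2 ^ i + 2 ^ i) := by
      apply Finset.sum_le_sum
      intro i hi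
      have : m + 1 - 1 - i ≤ (m - 1 - i) + 1 := by omega
      calc (m + 1 - 1 - i) * 2 ^ i ≤ ((m - 1 - i) + 1) * 2 ^ i :=
            Nat.mul_le_mul_right _ this
        _ = (m - 1 - i) * 2 ^ i + 2 ^ i := by ring
    rw [Finset.sum_add_distrib, aux_geom] at h1
    have h2 : (m + 1 - 1 - m) * 2 ^ m = 0 := by simp
    have h3 : 1 ≤ 2 ^ m := Nat.one_le_two_pow
    have := ih
    calc ∑ i ∈ Finset.range m, (m + 1 - 1 - i) * 2 ^ i + (m + 1 - 1 - m) * 2 ^ m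
        ≤ (∑ i ∈ Finset.range m, (m - 1 - i) * 2 ^ i + (2 ^ m - 1)) + 0 := by
          rw [h2]; exact Nat.add_le_add h1 (le_refl 0)
      _ ≤ (2 ^ m + (2 ^ m - 1)) + 0 := by omega
      _ ≤ 2 ^ (m + 1) := by rw [pow_succ]; omega

theorem stmt9 (N m : ℕ) (hN : 2 ≤ N) (α : ℕ → ℕ)
    (hα : ∀ i, α i ≤ 1) (hm : m = Nat.log 2 N) (hαm : α m = 1)
    (hexp : N = ∑ i ∈ Finset.range (m + 1), α i * 2 ^ i) :
    Real.logb 2 N - 2 ≤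
      (1 / (N : ℝ)) * ∑ i ∈ Finset.range (m + 1), (i : ℝ) * (α i : ℝ) * 2 ^ i := by
  have hm1 : 1 ≤ m := by
    rw [hm]
    exact Nat.log_pos (by norm_num) hN
  -- key natural number inequality
  have key : (m - 1) * N ≤ ∑ i ∈ Finset.range (m + 1), i * α i * 2 ^ i := by
    conv_lhs => rw [hexp, Finset.mul_sum]
    rw [Finset.sum_range_succ, Finset.sum_range_succ, hαm]
    have h1 : ∑ i ∈ Finset.range m, (m - 1) * (α i * 2 ^ i) ≤
        ∑ i ∈ Finset.range m, (i * α i * 2 ^ i + (m - 1 - i) * 2 ^ i) := by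
      apply Finset.sum_le_sum
      intro i hi
      rcases Nat.le_one_iff_eq_zero_or_eq_one.mp (hα i) with h | h
      · simp [h]
      · simp only [h, mul_one]
        have : m - 1 ≤ i + (m - 1 - i) := by omega
        calc (m - 1) * (1 * 2 ^ i) = (m - 1) * 2 ^ i := by ring
          _ ≤ (i + (m - 1 - i)) * 2 ^ i := Nat.mul_le_mul_right _ this
          _ = i * 2 ^ i + (m - 1 - i) * 2 ^ i := by ring
    rw [Finset.sum_add_distrib] at h1
    have h2 := aux_slack m
    have h3 : (m - 1) * (1 * 2 ^ m) + 2 ^ m = m * 1 * 2 ^ m := by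
      have : (m - 1) + 1 = m := by omega
      calc (m - 1) * (1 * 2 ^ m) + 2 ^ m = ((m - 1) + 1) * 2 ^ m := by ring
        _ = m * 1 * 2 ^ m := by rw [this]; ring
    calc ∑ i ∈ Finset.range m, (m - 1) * (α i * 2 ^ i) + (m - 1) * (1 * 2 ^ m)
        ≤ (∑ i ∈ Finset.range m, i * α i * 2 ^ i +
            ∑ i ∈ Finset.range m, (m - 1 - i) * 2 ^ i) + (m - 1) * (1 * 2 ^ m) :=
          Nat.add_le_add_right h1 _
      _ ≤ (∑ i ∈ Finset.range m, i * α i * 2 ^ i + 2 ^ m) + (m - 1) * (1 * 2 ^ m) :=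
          Nat.add_le_add_right (Nat.add_le_add_left h2 _) _
      _ = ∑ i ∈ Finset.range m, i * α i * 2 ^ i + m * 1 * 2 ^ m := by rw [← h3]; ring
  -- cast to reals
  have hNpos : (0 : ℝ) < N := by positivity
  have hS : ((m : ℝ) - 1) * N ≤ ∑ i ∈ Finset.range (m + 1), (i : ℝ) * (α i : ℝ) * 2 ^ i := by
    have := key
    have hcast : (((m - 1) * N : ℕ) : ℝ) ≤
        ((∑ i ∈ Finset.range (m + 1), i * α i * 2 ^ i : ℕ) : ℝ) := by exact_mod_cast this
    push_cast [Nat.cast_sub hm1] at hcast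
    convert hcast using 2
  -- log bound
  have hlog : Real.logb 2 N ≤ (m : ℝ) + 1 := by
    have hNlt : N < 2 ^ (m + 1) := hm ▸ Nat.lt_pow_succ_log_self (by norm_num) N
    have hNlt' : (N : ℝ) ≤ (2 : ℝ) ^ (m + 1) := by exact_mod_cast hNlt.le
    calc Real.logb 2 N ≤ Real.logb 2 ((2 : ℝ) ^ (m + 1)) :=
          Real.logb_le_logb_of_le (by norm_num) hNpos hNlt'
      _ = (m : ℝ) + 1 := by
          rw [Real.logb_pow, Real.logb_self_eq_one (by norm_num)]
          push_cast; ring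
  have hfinal : ((m : ℝ) - 1) ≤
      (1 / (N : ℝ)) * ∑ i ∈ Finset.range (m + 1), (i : ℝ) * (α i : ℝ) * 2 ^ i := by
    rw [one_div, ← div_eq_inv_mul, le_div_iff₀ hNpos]
    exact hS
  linarith
end

section
/- Let A be a nonempty finite alphabet, μ a probability distribution on A, n > 1, and μ^n the product distribution on words Fin n → A. For u : Fin n → A let |S_u| = n!/∏_{a∈A} ν_u(a)! be the size of its type class, and let E(u) = (1/|S_u|) Σ_i i · α_i(|S_u|) · 2^i, where α_i(N) are the binary digits of N. Then the expected number of secret bits per covertext letter transmitted by St_n(A), L_n = (1/n) Σ_{u} μ^n(u) · E(u), satisfies L_n ≥ (1/n) ( Σ_{u} μ^n(u) · log₂( n!/∏_{a∈A} ν_u(a)! ) − 2 ). -/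
/-- ν_u(a): the number of occurrences of the letter `a` in the word `u`. -/
def freq {A : Type*} [DecidableEq A] {n : ℕ} (u : Fin n → A) (a : A) : ℕ :=
  (Finset.univ.filter fun i => u i = a).card

/-- |S_u| = n! / ∏ₐ ν_u(a)! : the size of the type class of `u`. -/
def typeClassCard {A : Type*} [Fintype A] [DecidableEq A] {n : ℕ} (u : Fin n → A) : ℕ :=
  n.factorial / ∏ a : A, (freq u a).factorial

/-- α_i(N): the i-th binary digit of `N`. -/
def binDigit (N i : ℕ) : ℕ := N / 2 ^ i % 2

/-- E(N) = (1/N) Σ_i i · α_i(N) · 2^i : the expected number of secret bits encoded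
into one covertext block whose type class has size `N`. -/
noncomputable def expBits (N : ℕ) : ℝ :=
  (1 / (N : ℝ)) * ∑ i ∈ Finset.range (Nat.log 2 N + 1), (i : ℝ) * (binDigit N i : ℝ) * 2 ^ i

lemma digit_sum (N m : ℕ) : ∑ i ∈ Finset.range m, binDigit N i * 2 ^ i = N % 2 ^ m := by
  induction m with
  | zero => simp [Nat.mod_one]
  | succ m ih =>
    rw [Finset.sum_range_succ, ih, pow_succ, Nat.mod_mul]
    unfold binDigit
    ring

lemma S_bound (k : ℕ) : (∑ i ∈ Finset.range (k + 1), ((k : ℝ) - (i : ℝ)) * 2 ^ i) ≤ 2 ^ (k + 1) := by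
  induction k with
  | zero => norm_num
  | succ k ih =>
    have hg : ∑ i ∈ Finset.range (k + 1), (2 : ℝ) ^ i = 2 ^ (k + 1) - 1 := by
      rw [geom_sum_eq (by norm_num : (2 : ℝ) ≠ 1)]; ring
    have e1 : ∑ i ∈ Finset.range (k + 1 + 1), (((k + 1 : ℕ) : ℝ) - (i : ℝ)) * 2 ^ i
        = (∑ i ∈ Finset.range (k + 1), ((k : ℝ) - (i : ℝ)) * 2 ^ i)
          + ∑ i ∈ Finset.range (k + 1), (2 : ℝ) ^ i := by
      rw [Finset.sum_range_succ, ← Finset.sum_add_distrib]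
      push_cast
      rw [sub_self, zero_mul, add_zero]
      exact Finset.sum_congr rfl fun i _ => by ring
    have hp : (2 : ℝ) ^ (k + 1 + 1) = 2 * 2 ^ (k + 1) := by ring
    rw [e1, hg, hp]
    linarith

lemma logb_bound {x : ℝ} (h1 : 1 ≤ x) (h2 : x ≤ 2) : Real.logb 2 x ≤ 2 - 2 / x := by
  have hx : 0 < x := lt_of_lt_of_le one_pos h1
  set y : ℝ := 1 / x with hy
  have hy1 : 1 / 2 ≤ y := by
    rw [hy, div_le_div_iff₀ (by norm_num) hx]; linarith
  have hy2 : y ≤ 1 := by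
    rw [hy, div_le_one hx]; exact h1
  have hkey : 2 * Real.log 2 * (y - 1) ≤ Real.log y := by
    have hc := (strictConcaveOn_log_Ioi).concaveOn
    have h := hc.2 (show (1 / 2 : ℝ) ∈ Set.Ioi 0 by norm_num)
      (show (1 : ℝ) ∈ Set.Ioi 0 by norm_num)
      (show (0 : ℝ) ≤ 2 * (1 - y) by linarith)
      (show (0 : ℝ) ≤ 2 * y - 1 by linarith)
      (show 2 * (1 - y) + (2 * y - 1) = 1 by ring)
    simp only [smul_eq_mul] at h
    have hcomb : 2 * (1 - y) * (1 / 2) + (2 * y - 1) * 1 = y := by ring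
    rw [hcomb, Real.log_one] at h
    have hl : Real.log (1 / 2) = -Real.log 2 := by
      rw [one_div, Real.log_inv]
    rw [hl] at h
    nlinarith
  have hlog2 : 0 < Real.log 2 := Real.log_pos one_lt_two
  have hlx : Real.log x = -Real.log y := by
    rw [hy, one_div, Real.log_inv, neg_neg]
  have h2x : 2 / x = 2 * y := by rw [hy]; ring
  rw [Real.logb, hlx, h2x, div_le_iff₀ hlog2]
  nlinarith

lemma key_bound (N : ℕ) (hN : 1 ≤ N) : Real.logb 2 (N : ℝ) ≤ expBits N + 2 := by
  set k := Nat.log 2 N with hk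
  have h1 : 2 ^ k ≤ N := Nat.pow_log_le_self 2 (by omega)
  have h2 : N < 2 ^ (k + 1) := Nat.lt_pow_succ_log_self one_lt_two N
  have hNpos : (0 : ℝ) < (N : ℝ) := by exact_mod_cast Nat.pos_of_ne_zero (by omega)
  have hpk : (0 : ℝ) < (2 : ℝ) ^ k := by positivity
  -- digit sum equals N
  have hsumN : (∑ i ∈ Finset.range (k + 1), (binDigit N i : ℝ) * 2 ^ i) = (N : ℝ) := by
    have h := digit_sum N (k + 1)
    rw [Nat.mod_eq_of_lt h2] at h
    exact_mod_cast h
  -- lower bound on the weighted digit sum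
  have hS : (k : ℝ) * N - 2 ^ (k + 1)
      ≤ ∑ i ∈ Finset.range (k + 1), (i : ℝ) * (binDigit N i : ℝ) * 2 ^ i := by
    have hterm : ∀ i ∈ Finset.range (k + 1),
        ((k : ℝ) - (i : ℝ)) * (binDigit N i : ℝ) * 2 ^ i ≤ ((k : ℝ) - (i : ℝ)) * 2 ^ i := by
      intro i hi
      have hik : (i : ℝ) ≤ (k : ℝ) := by
        exact_mod_cast Nat.lt_succ_iff.mp (Finset.mem_range.mp hi)
      have hb : (binDigit N i : ℝ) ≤ 1 := by
        have : binDigit N i ≤ 1 := Nat.lt_succ_iff.mp (Nat.mod_lt _ two_pos)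
        exact_mod_cast this
      have hb0 : (0 : ℝ) ≤ (binDigit N i : ℝ) := by positivity
      have hpi : (0 : ℝ) ≤ (2 : ℝ) ^ i := by positivity
      calc ((k : ℝ) - (i : ℝ)) * (binDigit N i : ℝ) * 2 ^ i
          ≤ ((k : ℝ) - (i : ℝ)) * 1 * 2 ^ i := by
            exact mul_le_mul_of_nonneg_right
              (mul_le_mul_of_nonneg_left hb (by linarith)) hpi
        _ = ((k : ℝ) - (i : ℝ)) * 2 ^ i := by ring
    have hle := Finset.sum_le_sum hterm
    have e : ∑ i ∈ Finset.range (k + 1), ((k : ℝ) - (i : ℝ)) * (binDigit N i : ℝ) * 2 ^ i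
        = (k : ℝ) * N - ∑ i ∈ Finset.range (k + 1), (i : ℝ) * (binDigit N i : ℝ) * 2 ^ i := by
      rw [← hsumN, Finset.mul_sum, ← Finset.sum_sub_distrib]
      exact Finset.sum_congr rfl fun i _ => by ring
    have := S_bound k
    linarith
  -- expBits lower bound
  have hE : (k : ℝ) - 2 ^ (k + 1) / N ≤ expBits N := by
    unfold expBits
    rw [← hk, one_div, inv_mul_eq_div]
    rw [le_div_iff₀ hNpos]
    have hc : 2 ^ (k + 1) / (N : ℝ) * N = 2 ^ (k + 1) :=
      div_mul_cancel₀ _ (ne_of_gt hNpos)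
    nlinarith
  -- logb upper bound
  have hx1 : (1 : ℝ) ≤ (N : ℝ) / 2 ^ k := by
    rw [le_div_iff₀ hpk, one_mul]; exact_mod_cast h1
  have hx2 : (N : ℝ) / 2 ^ k ≤ 2 := by
    rw [div_le_iff₀ hpk]
    have : (N : ℝ) < 2 ^ (k + 1) := by exact_mod_cast h2
    rw [pow_succ] at this
    linarith
  have hlb := logb_bound hx1 hx2
  have hxpos : (0 : ℝ) < (N : ℝ) / 2 ^ k := lt_of_lt_of_le one_pos hx1
  have hdecomp : Real.logb 2 ((N : ℝ) / 2 ^ k) = Real.logb 2 (N : ℝ) - (k : ℝ) := by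
    rw [Real.logb_div (ne_of_gt hNpos) (ne_of_gt hpk), Real.logb_pow,
      Real.logb_self_eq_one (by norm_num : (1:ℝ) < 2)]
    ring
  have hdiv : 2 / ((N : ℝ) / 2 ^ k) = 2 ^ (k + 1) / N := by
    rw [div_div_eq_mul_div, pow_succ]
    ring
  rw [hdecomp, hdiv] at hlb
  linarith

lemma typeClassCard_pos {A : Type*} [Fintype A] [DecidableEq A] {n : ℕ} (u : Fin n → A) :
    1 ≤ typeClassCard u := by
  have hsum : ∑ a : A, freq u a = n := by
    unfold freq
    have h := Finset.card_eq_sum_card_fiberwise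
      (f := u) (s := (Finset.univ : Finset (Fin n))) (t := (Finset.univ : Finset A))
      (fun i _ => Finset.mem_univ (u i))
    simpa using h.symm
  have he : typeClassCard u = Nat.multinomial Finset.univ (freq u) := by
    unfold typeClassCard Nat.multinomial
    rw [hsum]
  rw [he]
  exact Nat.multinomial_pos _ _

theorem stmt11 (A : Type*) [Fintype A] [Nonempty A] [DecidableEq A] (μ : PMF A)
    (n : ℕ) (hn : 1 < n) :
    (1 / (n : ℝ)) *
        ((∑ u : Fin n → A,
            (∏ i, (μ (u i)).toReal) * Real.logb 2 (typeClassCard u)) - 2) ≤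
      (1 / (n : ℝ)) *
        ∑ u : Fin n → A, (∏ i, (μ (u i)).toReal) * expBits (typeClassCard u) := by
  have hμ : ∑ a : A, (μ a).toReal = 1 := by
    have h := μ.tsum_coe
    rw [tsum_fintype] at h
    have h2 : (∑ a : A, μ a).toReal = ∑ a : A, (μ a).toReal :=
      ENNReal.toReal_sum fun a _ => μ.apply_ne_top a
    rw [h] at h2
    simpa using h2.symm
  have hsum1 : ∑ u : Fin n → A, (∏ i, (μ (u i)).toReal) = 1 := by
    calc ∑ u : Fin n → A, (∏ i, (μ (u i)).toReal)
        = ∏ i : Fin n, ∑ a : A, (μ a).toReal := by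
          rw [Finset.prod_univ_sum]
          rw [Fintype.piFinset_univ]
      _ = 1 := by rw [hμ]; simp
  apply mul_le_mul_of_nonneg_left _ (by positivity : (0 : ℝ) ≤ 1 / (n : ℝ))
  have h1 : ∀ u : Fin n → A,
      (∏ i, (μ (u i)).toReal) * Real.logb 2 (typeClassCard u)
        ≤ (∏ i, (μ (u i)).toReal) * expBits (typeClassCard u)
          + 2 * (∏ i, (μ (u i)).toReal) := by
    intro u
    have hp : 0 ≤ ∏ i, (μ (u i)).toReal :=
      Finset.prod_nonneg fun i _ => ENNReal.toReal_nonneg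
    have hkey := key_bound _ (typeClassCard_pos u)
    nlinarith
  have hle := Finset.sum_le_sum (fun u (_ : u ∈ Finset.univ) => h1 u)
  rw [Finset.sum_add_distrib, ← Finset.mul_sum, hsum1] at hle
  linarith
end

section
/- Let A be a nonempty finite alphabet and μ a probability distribution on A. Let X₀, X₁, X₂, … be i.i.d. random variables with law μ, and for n ≥ 1 and a ∈ A let ν_n(a) = #{i < n : X_i = a}. Then almost surely (1/n) · log₂( n! / ∏_{a∈A} ν_n(a)! ) → h(μ) as n → ∞, where h(μ) = − Σ_{a∈A} μ(a) log₂ μ(a) is the Shannon entropy of μ. -/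
/-!
Stirling's formula gives `log m! = m log m - m + O(log m)` uniformly in `m`, hence
`log (n! / ∏ₐ νₐ!) = n · H(ν/n) + O(log n)`, where `H` is the (natural-log) entropy of the
empirical distribution `ν/n`. By the strong law of large numbers `ν_n(a)/n → μ(a)` almost
surely, and `H` is continuous.
-/

open Real Filter Finset Topology MeasureTheory ProbabilityTheory
open scoped Nat

noncomputable def logFactorialError (m : ℕ) : ℝ := log m ! - (m * log m - m)

lemma logFactorialError_eq_log_stirlingSeq {m : ℕ} (hm : m ≠ 0) :
    logFactorialError m = log (Stirling.stirlingSeq m) + log (2 * m) / 2 := by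
  rw [Stirling.log_stirlingSeq_formula, log_div (by positivity) (exp_pos 1).ne', log_exp,
    logFactorialError]
  ring

lemma abs_logFactorialError_le (m : ℕ) : |logFactorialError m| ≤ 1 + log m := by
  rcases eq_or_ne m 0 with rfl | hm
  · simp [logFactorialError]
  have hlower : 1 ≤ Stirling.stirlingSeq m :=
    (one_le_sqrt.mpr (by linarith [pi_gt_three])).trans (Stirling.sqrt_pi_le_stirlingSeq hm)
  have hupper : Stirling.stirlingSeq m ≤ exp 1 / √2 := by
    obtain ⟨k, rfl⟩ := Nat.exists_eq_succ_of_ne_zero hm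
    simpa [Stirling.stirlingSeq_one] using Stirling.stirlingSeq'_antitone (Nat.zero_le k)
  have hlog_upper : log (Stirling.stirlingSeq m) ≤ 1 - log 2 / 2 := by
    calc log (Stirling.stirlingSeq m) ≤ log (exp 1 / √2) := log_le_log (by positivity) hupper
      _ = 1 - log 2 / 2 := by
        rw [log_div (by positivity) (by positivity), log_exp, log_sqrt zero_le_two]
  have hm1 : (1 : ℝ) ≤ m := by exact_mod_cast Nat.one_le_iff_ne_zero.mpr hm
  have hlogm : 0 ≤ log (m : ℝ) := log_nonneg hm1
  rw [logFactorialError_eq_log_stirlingSeq hm, log_mul two_ne_zero (by positivity), abs_le]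
  constructor <;> nlinarith [log_nonneg hlower, log_nonneg one_le_two]

lemma tendsto_one_add_log_div_atTop :
    Tendsto (fun n : ℕ => (1 + log n) / n) atTop (𝓝 0) := by
  have hlog : Tendsto (fun n : ℕ => log n / n) atTop (𝓝 0) := by
    have := (tendsto_pow_log_div_mul_add_atTop 1 0 1 one_ne_zero).comp tendsto_natCast_atTop_atTop
    simpa [Function.comp_def] using this
  simpa [add_div] using tendsto_one_div_atTop_nhds_zero_nat.add hlog

section Multinomial

variable {ι : Type*} [Fintype ι]

lemma log_factorial_sub_sum_log_factorial {ν : ι → ℕ} {n : ℕ} (hsum : ∑ a, ν a = n) :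
    log n ! - ∑ a, log (ν a)! = n * ∑ a, negMulLog (ν a / n) +
      (logFactorialError n - ∑ a, logFactorialError (ν a)) := by
  have hsum' : ∑ a, (ν a : ℝ) = n := by exact_mod_cast hsum
  have hle : ∀ a, ν a ≤ n := fun a => hsum ▸ single_le_sum (by simp) (mem_univ a)
  have hterm : ∀ a, (n : ℝ) * negMulLog (ν a / n) = ν a * log n - ν a * log (ν a) := by
    intro a
    rcases eq_or_ne (ν a) 0 with h | h
    · simp [h]
    have hn : (n : ℝ) ≠ 0 := by exact_mod_cast (Nat.pos_of_ne_zero h |>.trans_le (hle a)).ne'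
    rw [negMulLog, log_div (by exact_mod_cast h) hn]
    field_simp
    ring
  simp only [mul_sum, hterm, logFactorialError, sum_sub_distrib, ← sum_mul, hsum']
  ring

lemma abs_logFactorialError_sub_sum_le {ν : ι → ℕ} {n : ℕ} (hsum : ∑ a, ν a = n) :
    |logFactorialError n - ∑ a, logFactorialError (ν a)| ≤
      (1 + Fintype.card ι) * (1 + log n) := by
  have hle : ∀ a, |logFactorialError (ν a)| ≤ 1 + log n := by
    intro a
    refine (abs_logFactorialError_le (ν a)).trans ?_
    rcases eq_or_ne (ν a) 0 with h | h
    · simpa [h] using log_natCast_nonneg n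
    gcongr
    exact hsum ▸ single_le_sum (by simp) (mem_univ a)
  calc |logFactorialError n - ∑ a, logFactorialError (ν a)|
      ≤ |logFactorialError n| + ∑ a, |logFactorialError (ν a)| :=
        (abs_sub _ _).trans (by gcongr; exact abs_sum_le_sum_abs _ _)
    _ ≤ (1 + log n) + ∑ _a : ι, (1 + log n) :=
        add_le_add (abs_logFactorialError_le n) (sum_le_sum fun a _ => hle a)
    _ = (1 + Fintype.card ι) * (1 + log n) := by simp; ring

theorem tendsto_log_factorial_div_prod_factorial_div {ν : ℕ → ι → ℕ}
    (hsum : ∀ n, ∑ a, ν n a = n) {p : ι → ℝ}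
    (hp : ∀ a, Tendsto (fun n => (ν n a : ℝ) / n) atTop (𝓝 (p a))) :
    Tendsto (fun n : ℕ => log ((n ! : ℝ) / ∏ a, ((ν n a)! : ℝ)) / n) atTop
      (𝓝 (∑ a, negMulLog (p a))) := by
  have hentropy : Tendsto (fun n => ∑ a, negMulLog (ν n a / n)) atTop
      (𝓝 (∑ a, negMulLog (p a))) :=
    tendsto_finsetSum _ fun a _ => (continuous_negMulLog.tendsto _).comp (hp a)
  have herr : Tendsto (fun n => (logFactorialError n - ∑ a, logFactorialError (ν n a)) / n)
      atTop (𝓝 0) := by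
    refine squeeze_zero_norm (fun n => ?_)
      (by simpa using tendsto_one_add_log_div_atTop.const_mul (1 + Fintype.card ι : ℝ))
    rw [norm_div, Real.norm_natCast, Real.norm_eq_abs, ← mul_div_assoc]
    exact div_le_div_of_nonneg_right (abs_logFactorialError_sub_sum_le (hsum n)) n.cast_nonneg
  have hsum_lim := hentropy.add herr
  rw [add_zero] at hsum_lim
  refine hsum_lim.congr' ?_
  filter_upwards [eventually_ne_atTop 0] with n hn
  have hfact : ∀ m : ℕ, (m ! : ℝ) ≠ 0 := fun m => by positivity
  rw [log_div (hfact n) (prod_ne_zero_iff.mpr fun a _ => hfact _), log_prod fun a _ => hfact _,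
    log_factorial_sub_sum_log_factorial (hsum n)]
  field_simp

end Multinomial

theorem tendsto_card_filter_eq_div_ae {Ω A : Type*} [MeasurableSpace Ω] {P : Measure Ω}
    [IsFiniteMeasure P] [MeasurableSpace A] [MeasurableSingletonClass A] [DecidableEq A]
    {X : ℕ → Ω → A} (hindep : Pairwise fun i j => IndepFun (X i) (X j) P)
    (hident : ∀ i, IdentDistrib (X i) (X 0) P P) (a : A) :
    ∀ᵐ ω ∂P, Tendsto (fun n : ℕ => (#{i ∈ range n | X i ω = a} : ℝ) / n) atTop
      (𝓝 ((P.map (X 0)).real {a})) := by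
  set ind : A → ℝ := ({a} : Set A).indicator 1
  have hind : Measurable ind := measurable_one.indicator (measurableSet_singleton a)
  have hlaw : P[ind ∘ X 0] = (P.map (X 0)).real {a} := by
    rw [← integral_indicator_one (measurableSet_singleton a),
      integral_map (hident 0).aemeasurable_fst hind.aestronglyMeasurable]
    rfl
  have hslln := strong_law_ae_real (fun i => ind ∘ X i)
    (.of_bound (hind.comp_aemeasurable (hident 0).aemeasurable_fst).aestronglyMeasurable 1
      (ae_of_all _ fun ω => (norm_indicator_le_norm_self _ _).trans (by simp)))
    (fun i j hij => (hindep hij).comp hind hind) (fun i => (hident i).comp hind)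
  filter_upwards [hslln] with ω hω
  rw [← hlaw]
  convert hω using 3 with n
  simp only [natCast_card_filter, ind, Function.comp_apply, Set.indicator_apply,
    Set.mem_singleton_iff, Pi.one_apply]

theorem stmt12_general (A : Type*) [Fintype A] [DecidableEq A]
    [MeasurableSpace A] [MeasurableSingletonClass A] (μ : PMF A)
    (Ω : Type*) [MeasurableSpace Ω] (P : Measure Ω) [IsProbabilityMeasure P]
    -- X₀, X₁, X₂, … are i.i.d. with law μ
    (X : ℕ → Ω → A) (hmeas : ∀ i, Measurable (X i))
    (hindep : iIndepFun X P)
    (hident : ∀ i : ℕ, Measure.map (X i) P = μ.toMeasure) :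
    -- almost surely (1/n) log₂( n! / ∏ₐ ν_n(a)! ) → h(μ)
    ∀ᵐ ω ∂P, Filter.Tendsto
      (fun n : ℕ => (1 / (n : ℝ)) * Real.logb 2
        ((n.factorial : ℝ) /
          ∏ a : A, ((((Finset.range n).filter fun i => X i ω = a).card).factorial : ℝ)))
      Filter.atTop
      (nhds (-∑ a : A, (μ a).toReal * Real.logb 2 (μ a).toReal)) := by
  have hident' : ∀ i, IdentDistrib (X i) (X 0) P P := fun i =>
    ⟨(hmeas i).aemeasurable, (hmeas 0).aemeasurable, by rw [hident i, hident 0]⟩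
  have hfreq := ae_all_iff.mpr fun a =>
    tendsto_card_filter_eq_div_ae (fun i j hij => hindep.indepFun hij) hident' a
  filter_upwards [hfreq] with ω hω
  have hsum : ∀ n, ∑ a, #{i ∈ range n | X i ω = a} = n := fun n => by
    rw [← card_eq_sum_card_fiberwise (fun i _ => mem_univ (X i ω)), card_range]
  have hfreq_μ : ∀ a, Tendsto (fun n : ℕ => (#{i ∈ range n | X i ω = a} : ℝ) / n) atTop
      (𝓝 (μ a).toReal) := by
    simpa [hident 0, Measure.real, PMF.toMeasure_apply_singleton] using hω
  have hlim := (tendsto_log_factorial_div_prod_factorial_div hsum hfreq_μ).div_const (log 2)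
  convert hlim using 2 with n
  · rw [logb]; ring
  · simp [logb, negMulLog, neg_div, sum_div, mul_div_assoc]

theorem stmt12 (A : Type*) [Fintype A] [Nonempty A] [DecidableEq A]
    [MeasurableSpace A] [MeasurableSingletonClass A] (μ : PMF A)
    (Ω : Type*) [MeasurableSpace Ω] (P : Measure Ω) [IsProbabilityMeasure P]
    -- X₀, X₁, X₂, … are i.i.d. with law μ
    (X : ℕ → Ω → A) (hmeas : ∀ i, Measurable (X i))
    (hindep : iIndepFun X P)
    (hident : ∀ i : ℕ, Measure.map (X i) P = μ.toMeasure) :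
    -- almost surely (1/n) log₂( n! / ∏ₐ ν_n(a)! ) → h(μ)
    ∀ᵐ ω ∂P, Filter.Tendsto
      (fun n : ℕ => (1 / (n : ℝ)) * Real.logb 2
        ((n.factorial : ℝ) /
          ∏ a : A, ((((Finset.range n).filter fun i => X i ω = a).card).factorial : ℝ)))
      Filter.atTop
      (nhds (-∑ a : A, (μ a).toReal * Real.logb 2 (μ a).toReal)) :=
  stmt12_general A μ Ω P X hmeas hindep hident
end

section
/- Let A be a nonempty finite alphabet, μ a probability distribution on A, and fix n > 1. Let L_n = (1/n) Σ_{u : Fin n → A} μ^n(u) · (1/|S_u|) Σ_i i · α_i(|S_u|) · 2^i be the expected number of secret bits per covertext letter transmitted by the stegosystem St_n(A), where |S_u| = n!/∏_{a∈A} ν_u(a)! and α_i(N) are the binary digits of N. Then (1 − (n(n−1)/2) · 2^{−H∞(μ)}) · (log₂(n!) − 2)/n ≤ L_n ≤ log₂(n!)/n, where H∞(μ) = min_{a : μ(a)>0} (− log₂ μ(a)) is the min-entropy of μ. In particular, for fixed n, as H∞(μ) → ∞ the rate L_n is confined to the interval [(log₂(n!) − 2)/n, log₂(n!)/n] in the limit,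 i.e., L_n tends to (log₂(n!) − O(1))/n. -/
/-- L_n: the expected number of secret bits per covertext letter transmitted by
the stegosystem St_n(A). -/
noncomputable def rateL (A : Type*) [Fintype A] [DecidableEq A] (μ : PMF A) (n : ℕ) : ℝ :=
  (1 / (n : ℝ)) * ∑ u : Fin n → A, (∏ i, (μ (u i)).toReal) * expBits (typeClassCard u)

open Finset

/-!
A block whose type class has `N` elements carries, in expectation, between `⌊log₂ N⌋ - 1` and
`⌊log₂ N⌋` secret bits: the binary expansion `N = ∑ αᵢ 2ⁱ` is dominated by its leading digit.
For the upper bound it then suffices that `|S_u| ≤ n!`. For the lower bound only words with `n`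
distinct letters are kept; they have `|S_u| = n!`, and by a union bound over the `n(n-1)/2`
collision events `u i = u j`, each of probability `∑ₐ μ(a)² ≤ maxₐ μ(a)`, they carry
probability at least `1 - n(n-1)/2 · 2^(-H∞(μ))`.
-/

lemma sum_range_binDigit_mul_two_pow (N k : ℕ) :
    ∑ i ∈ range k, binDigit N i * 2 ^ i = N % 2 ^ k := by
  induction k with
  | zero => simp [Nat.mod_one]
  | succ k ih =>
    rw [sum_range_succ, ih, pow_succ, Nat.mod_mul, binDigit]
    ring

lemma sum_binDigit_mul_two_pow (N : ℕ) :
    ∑ i ∈ range (Nat.log 2 N + 1), binDigit N i * 2 ^ i = N := by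
  rw [sum_range_binDigit_mul_two_pow, Nat.mod_eq_of_lt (Nat.lt_pow_succ_log_self one_lt_two N)]

lemma natCast_eq_sum_binDigit_mul_two_pow (N : ℕ) :
    (N : ℝ) = ∑ i ∈ range (Nat.log 2 N + 1), (binDigit N i : ℝ) * 2 ^ i := by
  exact_mod_cast (sum_binDigit_mul_two_pow N).symm

lemma binDigit_le_one (N i : ℕ) : binDigit N i ≤ 1 :=
  Nat.lt_succ_iff.mp (Nat.mod_lt _ two_pos)

lemma binDigit_log_eq_one {N : ℕ} (hN : N ≠ 0) : binDigit N (Nat.log 2 N) = 1 := by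
  have h1 : 1 ≤ N / 2 ^ Nat.log 2 N :=
    (Nat.one_le_div_iff (by positivity)).2 (Nat.pow_log_le_self 2 hN)
  have h2 : N / 2 ^ Nat.log 2 N < 2 := by
    rw [Nat.div_lt_iff_lt_mul (by positivity), mul_comm, ← pow_succ]
    exact Nat.lt_pow_succ_log_self one_lt_two N
  unfold binDigit
  omega

lemma sum_range_sub_one_sub_mul_two_pow (k : ℕ) :
    ∑ i ∈ range k, ((k : ℝ) - 1 - i) * 2 ^ i = 2 ^ k - k - 1 := by
  induction k with
  | zero => simp
  | succ k ih =>
    have h : ∀ i ∈ range (k + 1), (((k + 1 : ℕ) : ℝ) - 1 - i) * 2 ^ i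
        = ((k : ℝ) - 1 - i) * 2 ^ i + 2 ^ i := fun i _ => by push_cast; ring
    rw [sum_congr rfl h, sum_add_distrib, sum_range_succ, ih, geom_sum_eq (by norm_num)]
    push_cast
    ring

lemma expBits_nonneg (N : ℕ) : 0 ≤ expBits N :=
  mul_nonneg (by positivity) (sum_nonneg fun _ _ => by positivity)

lemma expBits_le_log (N : ℕ) : expBits N ≤ Nat.log 2 N := by
  rcases eq_or_ne N 0 with rfl | hN
  · simp [expBits]
  have hN' := natCast_eq_sum_binDigit_mul_two_pow N
  set k := Nat.log 2 N
  have key : ∑ i ∈ range (k + 1), (i : ℝ) * binDigit N i * 2 ^ i ≤ k * N := by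
    rw [hN', mul_sum]
    simp only [mul_assoc]
    gcongr with i hi
    exact_mod_cast Nat.lt_succ_iff.mp (mem_range.mp hi)
  rw [expBits, one_div_mul_eq_div, div_le_iff₀ (by positivity)]
  exact key

lemma natLog_sub_one_le_expBits {N : ℕ} (hN : N ≠ 0) : (Nat.log 2 N : ℝ) - 1 ≤ expBits N := by
  have hN' := natCast_eq_sum_binDigit_mul_two_pow N
  set k := Nat.log 2 N
  have hlow : ∑ i ∈ range k, ((k : ℝ) - 1 - i) * binDigit N i * 2 ^ i ≤ 2 ^ k := by
    calc _ ≤ ∑ i ∈ range k, ((k : ℝ) - 1 - i) * 2 ^ i := by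
          refine sum_le_sum fun i hi => mul_le_mul_of_nonneg_right ?_ (by positivity)
          have : (i : ℝ) + 1 ≤ k := by exact_mod_cast mem_range.mp hi
          exact mul_le_of_le_one_right (by linarith) (by exact_mod_cast binDigit_le_one N i)
      _ ≤ 2 ^ k := by rw [sum_range_sub_one_sub_mul_two_pow]; linarith
  -- the leading digit contributes `2 ^ k`, which absorbs all the lower digits
  have key : ((k : ℝ) - 1) * N ≤ ∑ i ∈ range (k + 1), (i : ℝ) * binDigit N i * 2 ^ i := by
    have hsplit : ∑ i ∈ range (k + 1), (i : ℝ) * binDigit N i * 2 ^ i - ((k : ℝ) - 1) * N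
        = 2 ^ k - ∑ i ∈ range k, ((k : ℝ) - 1 - i) * binDigit N i * 2 ^ i := by
      have h : ∀ i : ℕ, (i : ℝ) * binDigit N i * 2 ^ i - ((k : ℝ) - 1) * (binDigit N i * 2 ^ i)
          = -(((k : ℝ) - 1 - i) * binDigit N i * 2 ^ i) := fun i => by ring
      have hk : binDigit N k = 1 := binDigit_log_eq_one hN
      rw [hN', mul_sum, ← sum_sub_distrib, sum_range_succ, hk]
      simp only [h, sum_neg_distrib]
      ring
    linarith
  rw [expBits, one_div_mul_eq_div, le_div_iff₀ (by positivity)]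
  exact key

lemma logb_lt_natLog_add_one (N : ℕ) : Real.logb 2 N < Nat.log 2 N + 1 := by
  have h := Nat.lt_floor_add_one (Real.logb 2 N)
  rwa [← Nat.cast_ofNat, Real.natFloor_logb_natCast] at h

lemma logb_sub_two_le_expBits {N : ℕ} (hN : N ≠ 0) : Real.logb 2 N - 2 ≤ expBits N := by
  linarith [natLog_sub_one_le_expBits hN, logb_lt_natLog_add_one N]

lemma expBits_le_logb_of_le {N M : ℕ} (h : N ≤ M) : expBits N ≤ Real.logb 2 M :=
  calc expBits N ≤ Nat.log 2 N := expBits_le_log N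
    _ ≤ Nat.log 2 M := by exact_mod_cast Nat.log_mono_right h
    _ ≤ Real.logb 2 M := by exact_mod_cast Real.natLog_le_logb M 2

lemma two_le_logb_factorial {n : ℕ} (hn : 3 ≤ n) : 2 ≤ Real.logb 2 n.factorial := by
  rw [Real.le_logb_iff_rpow_le one_lt_two (by positivity)]
  have h4 : 4 ≤ n.factorial := le_trans (by decide) (Nat.factorial_le hn)
  norm_num
  exact_mod_cast h4

lemma typeClassCard_le_factorial {A : Type*} [Fintype A] [DecidableEq A] {n : ℕ}
    (u : Fin n → A) : typeClassCard u ≤ n.factorial :=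
  Nat.div_le_self _ _

lemma typeClassCard_of_injective {A : Type*} [Fintype A] [DecidableEq A] {n : ℕ}
    {u : Fin n → A} (hu : Function.Injective u) : typeClassCard u = n.factorial := by
  have hfreq : ∀ a, freq u a ≤ 1 := fun a =>
    card_le_one.mpr fun i hi j hj => hu ((mem_filter.mp hi).2.trans (mem_filter.mp hj).2.symm)
  have hprod : ∏ a, (freq u a).factorial = 1 :=
    prod_eq_one fun a _ => Nat.factorial_eq_one.mpr (hfreq a)
  rw [typeClassCard, hprod, Nat.div_one]

section WordProbability

variable {A : Type*} (μ : PMF A)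

noncomputable def wordProb {ι : Type*} [Fintype ι] (u : ι → A) : ℝ :=
  ∏ i, (μ (u i)).toReal

lemma wordProb_nonneg {ι : Type*} [Fintype ι] (u : ι → A) : 0 ≤ wordProb μ u :=
  prod_nonneg fun _ _ => ENNReal.toReal_nonneg

variable [Fintype A]

lemma sum_toReal_eq_one : ∑ a, (μ a).toReal = 1 := by
  rw [← ENNReal.toReal_sum fun a _ => μ.apply_ne_top a,
    ← tsum_fintype (L := .unconditional _), μ.tsum_coe, ENNReal.toReal_one]

lemma sum_wordProb (ι : Type*) [Fintype ι] [DecidableEq ι] :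
    ∑ u : ι → A, wordProb μ u = 1 := by
  rw [show ∑ u : ι → A, wordProb μ u = ∏ _i : ι, ∑ a, (μ a).toReal from
    (Fintype.prod_sum fun _ a => (μ a).toReal).symm, sum_toReal_eq_one, prod_const_one]

variable [Nonempty A]

noncomputable def maxProb : ℝ :=
  univ.sup' univ_nonempty fun a => (μ a).toReal

lemma toReal_le_maxProb (a : A) : (μ a).toReal ≤ maxProb μ :=
  le_sup' (fun a => (μ a).toReal) (mem_univ a)

lemma maxProb_le_one : maxProb μ ≤ 1 :=
  sup'_le _ _ fun a _ =>
    ENNReal.toReal_le_of_le_ofReal zero_le_one (by simpa using μ.coe_le_one a)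

variable [DecidableEq A]

lemma sum_wordProb_apply_eq_apply_le_maxProb {ι : Type*} [Fintype ι] [DecidableEq ι]
    {i j : ι} (hij : i ≠ j) :
    ∑ u : ι → A with u i = u j, wordProb μ u ≤ maxProb μ := by
  let j' : {k // k ≠ i} := ⟨j, hij.symm⟩
  -- split off the coordinate `i`, which is then forced to equal the coordinate `j`
  have hsplit : ∑ u : ι → A with u i = u j, wordProb μ u
      = ∑ p : A × ({k // k ≠ i} → A),
          if p.1 = p.2 j' then (μ p.1).toReal * wordProb μ p.2 else 0 := by
    rw [sum_filter]
    refine Fintype.sum_equiv (Equiv.funSplitAt i A) _ _ fun u => ?_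
    simp only [Equiv.funSplitAt_apply, wordProb, Fintype.prod_eq_mul_prod_subtype_ne _ i]
    rfl
  calc ∑ u : ι → A with u i = u j, wordProb μ u
      = ∑ v : {k // k ≠ i} → A, (μ (v j')).toReal * wordProb μ v := by
        rw [hsplit, Fintype.sum_prod_type_right]
        simp only [sum_ite_eq', mem_univ, if_true]
    _ ≤ ∑ v : {k // k ≠ i} → A, maxProb μ * wordProb μ v :=
        sum_le_sum fun v _ => mul_le_mul_of_nonneg_right (toReal_le_maxProb μ _)
          (wordProb_nonneg μ v)
    _ = maxProb μ := by rw [← mul_sum, sum_wordProb, mul_one]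

lemma sum_wordProb_not_injective_le (n : ℕ) :
    ∑ u : Fin n → A with ¬ Function.Injective u, wordProb μ u
      ≤ (n : ℝ) * (n - 1) / 2 * maxProb μ := by
  -- union bound over the `n.choose 2` collision events `u i = u j`, `i < j`
  set g : (Fin n → A) → ℝ := fun u => ∑ j, ∑ i ∈ Iio j, if u i = u j then wordProb μ u else 0
  have hterm : ∀ u (i j : Fin n), 0 ≤ if u i = u j then wordProb μ u else 0 := fun u i j => by
    split_ifs
    exacts [wordProb_nonneg μ u, le_rfl]
  have hg0 : ∀ u, 0 ≤ g u := fun u =>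
    sum_nonneg fun j _ => sum_nonneg fun i _ => hterm u i j
  have hg : ∀ u, ¬ Function.Injective u → wordProb μ u ≤ g u := by
    intro u hu
    obtain ⟨i, j, hij, hlt⟩ : ∃ i j, u i = u j ∧ i < j := by
      obtain ⟨a, b, hab, hne⟩ := Function.not_injective_iff.mp hu
      rcases hne.lt_or_gt with h | h
      exacts [⟨a, b, hab, h⟩, ⟨b, a, hab.symm, h⟩]
    calc wordProb μ u = if u i = u j then wordProb μ u else 0 := (if_pos hij).symm
      _ ≤ ∑ i ∈ Iio j, if u i = u j then wordProb μ u else 0 :=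
          single_le_sum (fun i _ => hterm u i j) (mem_Iio.mpr hlt)
      _ ≤ g u := single_le_sum (f := fun j => ∑ i ∈ Iio j, _)
          (fun j _ => sum_nonneg fun i _ => hterm u i j) (mem_univ j)
  calc ∑ u : Fin n → A with ¬ Function.Injective u, wordProb μ u
      ≤ ∑ u : Fin n → A with ¬ Function.Injective u, g u :=
        sum_le_sum fun u hu => hg u (mem_filter.mp hu).2
    _ ≤ ∑ u, g u := sum_le_sum_of_subset_of_nonneg (filter_subset _ _) fun u _ _ => hg0 u
    _ = ∑ j : Fin n, ∑ i ∈ Iio j, ∑ u : Fin n → A with u i = u j, wordProb μ u := by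
        simp only [g, sum_filter]
        rw [sum_comm]
        exact sum_congr rfl fun j _ => sum_comm
    _ ≤ ∑ j : Fin n, ∑ _i ∈ Iio j, maxProb μ :=
        sum_le_sum fun j _ => sum_le_sum fun i hi =>
          sum_wordProb_apply_eq_apply_le_maxProb μ (mem_Iio.mp hi).ne
    _ = (n : ℝ) * (n - 1) / 2 * maxProb μ := by
        simp only [sum_const, Fin.card_Iio, nsmul_eq_mul, ← sum_mul]
        rw [← Nat.cast_sum, Fin.sum_univ_eq_sum_range (fun i => i) n, sum_range_id,
          ← Nat.choose_two_right, Nat.cast_choose_two]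

lemma one_sub_le_sum_wordProb_injective (n : ℕ) :
    1 - (n : ℝ) * (n - 1) / 2 * maxProb μ
      ≤ ∑ u : Fin n → A with Function.Injective u, wordProb μ u := by
  have h := sum_filter_add_sum_filter_not univ (fun u : Fin n → A => Function.Injective u)
    (wordProb μ)
  rw [sum_wordProb μ (Fin n)] at h
  linarith [sum_wordProb_not_injective_le μ n]

end WordProbability

section Rate

variable {A : Type*} [Fintype A] [DecidableEq A] (μ : PMF A)

lemma rateL_eq (n : ℕ) :
    rateL A μ n = 1 / n * ∑ u : Fin n → A, wordProb μ u * expBits (typeClassCard u) := rfl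

lemma rateL_nonneg (n : ℕ) : 0 ≤ rateL A μ n :=
  mul_nonneg (by positivity)
    (sum_nonneg fun u _ => mul_nonneg (wordProb_nonneg μ u) (expBits_nonneg _))

lemma rateL_le_logb_factorial_div (n : ℕ) : rateL A μ n ≤ Real.logb 2 n.factorial / n :=
  calc rateL A μ n ≤ 1 / n * ∑ u : Fin n → A, wordProb μ u * Real.logb 2 n.factorial := by
        rw [rateL_eq]
        gcongr with u
        · exact wordProb_nonneg μ u
        · exact expBits_le_logb_of_le (typeClassCard_le_factorial u)
    _ = Real.logb 2 n.factorial / n := by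
        rw [← sum_mul, sum_wordProb μ (Fin n), one_mul, one_div_mul_eq_div]

lemma sum_wordProb_injective_mul_le_rateL (n : ℕ) :
    (∑ u : Fin n → A with Function.Injective u, wordProb μ u) *
      ((Real.logb 2 n.factorial - 2) / n) ≤ rateL A μ n :=
  calc _ = 1 / n * ∑ u : Fin n → A with Function.Injective u,
        wordProb μ u * (Real.logb 2 n.factorial - 2) := by
        rw [← sum_mul]; ring
    _ ≤ 1 / n * ∑ u : Fin n → A with Function.Injective u,
        wordProb μ u * expBits (typeClassCard u) := by
        gcongr with u hu
        · exact wordProb_nonneg μ u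
        · rw [typeClassCard_of_injective (mem_filter.mp hu).2]
          exact logb_sub_two_le_expBits (Nat.factorial_ne_zero n)
    _ ≤ rateL A μ n := by
        rw [rateL_eq]
        gcongr
        · exact fun u _ _ => mul_nonneg (wordProb_nonneg μ u) (expBits_nonneg _)
        · exact filter_subset _ _

end Rate

theorem stmt16_general (A : Type*) [Fintype A] [Nonempty A] [DecidableEq A] (μ : PMF A)
    (n : ℕ)
    -- H∞(μ) is the min-entropy of μ, so that 2^(−H∞(μ)) = maxₐ μ(a)
    (Hinf : ℝ)
    (hH : (2 : ℝ) ^ (-Hinf) = Finset.univ.sup' Finset.univ_nonempty fun a : A => (μ a).toReal) :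
    (1 - ((n : ℝ) * (n - 1) / 2) * (2 : ℝ) ^ (-Hinf)) *
        ((Real.logb 2 (n.factorial) - 2) / n) ≤ rateL A μ n ∧
      rateL A μ n ≤ Real.logb 2 (n.factorial) / n := by
  rw [show (2 : ℝ) ^ (-Hinf) = maxProb μ from hH]
  refine ⟨?_, rateL_le_logb_factorial_div μ n⟩
  rcases le_or_gt 3 n with hn | hn
  · exact (mul_le_mul_of_nonneg_right (one_sub_le_sum_wordProb_injective μ n)
      (div_nonneg (sub_nonneg.mpr (two_le_logb_factorial hn)) (by positivity))).trans
      (sum_wordProb_injective_mul_le_rateL μ n)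
  · -- for `n ≤ 2` the claimed lower bound is nonpositive
    refine (mul_nonpos_of_nonneg_of_nonpos ?_ ?_).trans (rateL_nonneg μ n)
    all_goals interval_cases n <;> norm_num [maxProb_le_one]

theorem stmt16 (A : Type*) [Fintype A] [Nonempty A] [DecidableEq A] (μ : PMF A)
    (n : ℕ) (hn : 1 < n)
    -- H∞(μ) is the min-entropy of μ, so that 2^(−H∞(μ)) = maxₐ μ(a)
    (Hinf : ℝ)
    (hH : (2 : ℝ) ^ (-Hinf) = Finset.univ.sup' Finset.univ_nonempty fun a : A => (μ a).toReal) :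
    (1 - ((n : ℝ) * (n - 1) / 2) * (2 : ℝ) ^ (-Hinf)) *
        ((Real.logb 2 (n.factorial) - 2) / n) ≤ rateL A μ n ∧
      rateL A μ n ≤ Real.logb 2 (n.factorial) / n :=
  stmt16_general A μ n Hinf hH
end
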